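/- Let Λ be a group, and let p be a Λ-colored partition of [k] ⊔ [l] and q a Λ-colored partition of [l] ⊔ [m]. Suppose (V, V′) is an aligned pair with V ∈ p, V′ ∈ q, max V = max V′ and min V′ ∈ V, and let p′ be obtained from p by splitting V at min V′ into V_l and V_r, recoloring col′(V_r) := col_q(V′)⁻¹ and col′(V_l) := col_p(V) · col_q(V′) · g⁻¹, where g is the ordered product of the colors of the relative outer p-blocks lying strictly between max V_l and min V_r. Then for every choice of boundary data, the solution sets of the interval-product systems for the pair (p,q) and for the pair (p′,q) coincide: a tuple x ∈ Λ^l satisfies all block equations of (p,q) if and only if it satisfies all block equations of (p′,q). -/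

import Mathlib

/-!
Split the interval of `V` as `[min V, max V_l] ⊔ gap ⊔ [min V′, max V]`. The gap is tiled by the
relative outer blocks, so once their equations hold the gap contributes exactly `g`, and the
`q`-equation of `V′` fixes the last factor as `col_q(V′)⁻¹`. Given all the other equations, the
equation of `V` is therefore equivalent to the equation of `V_l` with the new color, while the
equation of `V_r` is the `q`-equation of `V′` read on the same interval.
-/

namespace Stmt17

/-- Ordered product `x_a x_{a+1} ⋯ x_b`. -/
def iprod {Λ : Type*} [Monoid Λ] (x : ℕ → Λ) (a b : ℕ) : Λ :=
  ((List.range' a (b + 1 - a)).map x).prod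

section Products

variable {Λ : Type*} [Monoid Λ] (x : ℕ → Λ)

def prodIco (a b : ℕ) : Λ :=
  ((List.range' a (b - a)).map x).prod

theorem iprod_eq_prodIco (a b : ℕ) : iprod x a b = prodIco x a (b + 1) := rfl

theorem prodIco_mul_prodIco {a m b : ℕ} (ham : a ≤ m) (hmb : m ≤ b) :
    prodIco x a m * prodIco x m b = prodIco x a b := by
  have h := List.range'_append (s := a) (m := m - a) (n := b - m) (step := 1)
  rw [one_mul, Nat.add_sub_cancel' ham, show m - a + (b - m) = b - a by omega] at h
  rw [prodIco, prodIco, prodIco, ← List.prod_append, ← List.map_append, h]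

theorem prod_ofFn_prodIco_of_monotone {s : ℕ} (t : Fin (s + 1) → ℕ) (ht : Monotone t) :
    (List.ofFn fun u : Fin s => prodIco x (t u.castSucc) (t u.succ)).prod =
      prodIco x (t 0) (t (Fin.last s)) := by
  induction s with
  | zero => simp [prodIco]
  | succ s ih =>
    have htail := ih (t ∘ Fin.succ) (ht.comp (Fin.strictMono_succ.monotone))
    simp only [Function.comp_apply, Fin.succ_castSucc, Fin.succ_last] at htail
    rw [List.ofFn_succ, List.prod_cons, htail, Fin.castSucc_zero]
    exact prodIco_mul_prodIco x (ht (Fin.zero_le _)) (ht (Fin.le_last _))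

theorem prod_ofFn_iprod_of_tiling {s : ℕ} (lo hi : Fin s → ℕ) {a b : ℕ}
    (hempty : s = 0 → a = b)
    (hfirst : ∀ h : 0 < s, lo ⟨0, h⟩ = a)
    (hlast : ∀ h : 0 < s, hi ⟨s - 1, by omega⟩ + 1 = b)
    (hchain : ∀ (u : ℕ) (h : u + 1 < s), hi ⟨u, by omega⟩ + 1 = lo ⟨u + 1, h⟩)
    (hle : ∀ u, lo u ≤ hi u) :
    (List.ofFn fun u => iprod x (lo u) (hi u)).prod = prodIco x a b := by
  set t : Fin (s + 1) → ℕ := fun u => if h : (u : ℕ) < s then lo ⟨u, h⟩ else b with ht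
  have ht_castSucc (u : Fin s) : t u.castSucc = lo u := by simp [ht]
  have ht_succ (u : Fin s) : t u.succ = hi u + 1 := by
    by_cases hu : (u : ℕ) + 1 < s
    · simp only [ht, Fin.val_succ, dif_pos hu]
      exact (hchain u hu).symm
    · have hu' : u = ⟨s - 1, by omega⟩ := Fin.ext (by dsimp only; omega)
      simp only [ht, Fin.val_succ, dif_neg hu]
      rw [hu', hlast (by omega)]
  have ht_zero : t 0 = a := by
    rcases Nat.eq_zero_or_pos s with hs | hs
    · simp [ht, hs, hempty hs]
    · simp [ht, hs, hfirst hs]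
  have ht_last : t (Fin.last s) = b := by simp [ht]
  have hmono : Monotone t := Fin.monotone_iff_le_succ.2 fun u => by
    rw [ht_castSucc, ht_succ]
    exact Nat.le_succ_of_le (hle u)
  rw [← ht_zero, ← ht_last, ← prod_ofFn_prodIco_of_monotone x t hmono]
  simp only [ht_castSucc, ht_succ, iprod_eq_prodIco]

end Products

/-- Encoding: the `p`-equations are indexed by `ι` (interval `[A i, B i]`, color `c i`), the
`q`-equations by `κ` (interval `[A' j, B' j]`, equation with `(d j)⁻¹`). The aligned pair is
`V = i₀`, `V' = j₀`; `max V_l = ml`, and the gap `[ml + 1, min V' - 1]` is tiled by the intervals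
of the relative outer blocks `W 0, …, W (s - 1)`. -/
theorem stmt17 {Λ : Type*} [Group Λ] {ι κ : Type*}
    (A B : ι → ℕ) (c : ι → Λ)
    (A' B' : κ → ℕ) (d : κ → Λ)
    (i₀ : ι) (j₀ : κ) (ml : ℕ)
    (hml : A i₀ ≤ ml) (h1 : ml < A' j₀) (h2 : A' j₀ ≤ B i₀) (h3 : B' j₀ = B i₀)
    (s : ℕ) (W : Fin s → ι)
    (htile0 : s = 0 → ml + 1 = A' j₀)
    (htileA : ∀ h : 0 < s, A (W ⟨0, h⟩) = ml + 1)
    (htileB : ∀ h : 0 < s, B (W ⟨s - 1, by omega⟩) + 1 = A' j₀)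
    (htilechain : ∀ (u : ℕ) (h : u + 1 < s), B (W ⟨u, by omega⟩) + 1 = A (W ⟨u + 1, h⟩))
    (htlb : ∀ u, A (W u) ≤ B (W u))
    (hWne : ∀ u, W u ≠ i₀)
    (g : Λ) (hg : g = (List.ofFn fun u => c (W u)).prod)
    (x : ℕ → Λ) :
    ((∀ i, iprod x (A i) (B i) = c i) ∧ (∀ j, iprod x (A' j) (B' j) = (d j)⁻¹)) ↔
      ((∀ i, i ≠ i₀ → iprod x (A i) (B i) = c i) ∧
        iprod x (A i₀) ml = c i₀ * d j₀ * g⁻¹ ∧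
        iprod x (A' j₀) (B i₀) = (d j₀)⁻¹ ∧
        ∀ j, iprod x (A' j) (B' j) = (d j)⁻¹) := by
  have hgap : (List.ofFn fun u => iprod x (A (W u)) (B (W u))).prod =
      prodIco x (ml + 1) (A' j₀) :=
    prod_ofFn_iprod_of_tiling x (A ∘ W) (B ∘ W) htile0 htileA htileB htilechain htlb
  have hsplit : iprod x (A i₀) (B i₀) =
      iprod x (A i₀) ml * prodIco x (ml + 1) (A' j₀) * iprod x (A' j₀) (B i₀) := by
    simp only [iprod_eq_prodIco]
    rw [prodIco_mul_prodIco x (by omega) (by omega), prodIco_mul_prodIco x (by omega) (by omega)]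
  have key (hp : ∀ i, i ≠ i₀ → iprod x (A i) (B i) = c i)
      (hq : ∀ j, iprod x (A' j) (B' j) = (d j)⁻¹) :
      iprod x (A i₀) (B i₀) = c i₀ ↔ iprod x (A i₀) ml = c i₀ * d j₀ * g⁻¹ := by
    have hG : prodIco x (ml + 1) (A' j₀) = g := by
      rw [← hgap, hg]
      exact congrArg _ (List.ofFn_inj.2 (funext fun u => hp _ (hWne u)))
    rw [hsplit, hG, ← h3, hq j₀, mul_inv_eq_iff_eq_mul, eq_mul_inv_iff_mul_eq]
  constructor
  · rintro ⟨hp, hq⟩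
    exact ⟨fun i _ => hp i, (key (fun i _ => hp i) hq).1 (hp i₀), h3 ▸ hq j₀, hq⟩
  · rintro ⟨hp, hL, -, hq⟩
    refine ⟨fun i => ?_, hq⟩
    by_cases hi : i = i₀
    · exact hi ▸ (key hp hq).2 hL
    · exact hp i hi

end Stmt17
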